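/- arXiv:2209.14475 — 5 statements merged into one kernel-verified Lean document; each statement's English description precedes it below -/
import Mathlib

section
/- Let H be a real inner product space, let q, x, v ∈ H with x ≠ v, let r > 0, and define φ(t) = (t/r)·q + (1 − t/r)·x. Suppose ‖q − x‖ = r and ⟨q − x, v − x⟩ > 0. Then t* = r·‖v − x‖² / (2·⟨q − x, v − x⟩) is the unique real number t satisfying t = ‖φ(t) − v‖. -/
open scoped RealInnerProductSpace

section AdjustedDistance

variable {H : Type*} [NormedAddCommGroup H] [InnerProductSpace ℝ H]

theorem norm_smul_add_one_sub_smul_sub_sq (q x v : H) (s : ℝ) :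
    ‖s • q + (1 - s) • x - v‖ ^ 2
      = s ^ 2 * ‖q - x‖ ^ 2 - 2 * s * ⟪q - x, v - x⟫ + ‖v - x‖ ^ 2 := by
  have hsplit : s • q + (1 - s) • x - v = s • (q - x) - (v - x) := by module
  rw [hsplit, norm_sub_sq_real, norm_smul, real_inner_smul_left, mul_pow,
    Real.norm_eq_abs, sq_abs]
  ring

/-- On the boundary `‖q - x‖ = r` the quadratic terms cancel, so the fixed-point equation
`t = ‖φ(t) - v‖` becomes linear in `t`. -/
theorem eq_norm_interpolate_sub_iff {q x v : H} {r : ℝ} (hr : r ≠ 0) (hqx : ‖q - x‖ = r)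
    (t : ℝ) :
    t = ‖(t / r) • q + (1 - t / r) • x - v‖
      ↔ 0 ≤ t ∧ 2 * t * ⟪q - x, v - x⟫ = r * ‖v - x‖ ^ 2 := by
  have hsq : ‖(t / r) • q + (1 - t / r) • x - v‖ ^ 2
      = t ^ 2 - 2 * t * ⟪q - x, v - x⟫ / r + ‖v - x‖ ^ 2 := by
    rw [norm_smul_add_one_sub_smul_sub_sq, hqx]
    field_simp
  constructor
  · intro ht
    refine ⟨ht ▸ norm_nonneg _, ?_⟩
    have h := congrArg (· ^ 2) ht
    simp only [hsq] at h
    field_simp at h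
    linarith
  · rintro ⟨ht, hlin⟩
    refine (sq_eq_sq₀ ht (norm_nonneg _)).mp ?_
    rw [hsq]
    field_simp
    linarith

end AdjustedDistance

theorem adjusted_distance_boundary_case_general
    {H : Type*} [NormedAddCommGroup H] [InnerProductSpace ℝ H]
    (q x v : H) (r : ℝ) (hr : 0 < r)
    (hqx : ‖q - x‖ = r) (hpos : 0 < ⟪q - x, v - x⟫) :
    (r * ‖v - x‖ ^ 2 / (2 * ⟪q - x, v - x⟫)
        = ‖((r * ‖v - x‖ ^ 2 / (2 * ⟪q - x, v - x⟫)) / r) • q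
            + (1 - (r * ‖v - x‖ ^ 2 / (2 * ⟪q - x, v - x⟫)) / r) • x - v‖)
      ∧ ∀ t : ℝ, t = ‖(t / r) • q + (1 - t / r) • x - v‖ →
          t = r * ‖v - x‖ ^ 2 / (2 * ⟪q - x, v - x⟫) := by
  have hc : 2 * ⟪q - x, v - x⟫ ≠ 0 := by positivity
  refine ⟨(eq_norm_interpolate_sub_iff hr.ne' hqx _).mpr ⟨by positivity, ?_⟩, fun t ht => ?_⟩
  · field_simp
  · obtain ⟨-, hlin⟩ := (eq_norm_interpolate_sub_iff hr.ne' hqx t).mp ht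
    rw [eq_div_iff hc]
    linarith

/-- boundary case of the adjusted-distance theorem:
If `‖q − x‖ = r` and `⟨q − x, v − x⟩ > 0`, then
`t* = r·‖v − x‖² / (2·⟨q − x, v − x⟩)` is the unique real `t` with
`t = ‖φ(t) − v‖`, where `φ(t) = (t/r)·q + (1 − t/r)·x`. -/
theorem adjusted_distance_boundary_case
    {H : Type*} [NormedAddCommGroup H] [InnerProductSpace ℝ H]
    (q x v : H) (hxv : x ≠ v) (r : ℝ) (hr : 0 < r)
    (hqx : ‖q - x‖ = r) (hpos : 0 < ⟪q - x, v - x⟫) :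
    (r * ‖v - x‖ ^ 2 / (2 * ⟪q - x, v - x⟫)
        = ‖((r * ‖v - x‖ ^ 2 / (2 * ⟪q - x, v - x⟫)) / r) • q
            + (1 - (r * ‖v - x‖ ^ 2 / (2 * ⟪q - x, v - x⟫)) / r) • x - v‖)
      ∧ ∀ t : ℝ, t = ‖(t / r) • q + (1 - t / r) • x - v‖ →
          t = r * ‖v - x‖ ^ 2 / (2 * ⟪q - x, v - x⟫) :=
  adjusted_distance_boundary_case_general q x v r hr hqx hpos
end

section
/- Let H be a real inner product space, let q, x, v ∈ H with x ≠ v, let r > 0, and define φ(t) = (t/r)·q + (1 − t/r)·x. Suppose ‖q − x‖ < r, and set u = r·(v − x) / (r² − ‖q − x‖²) and t* = √(⟨u, q − x⟩² + r·⟨u, v − x⟩) − ⟨u, q − x⟩. Then t* > 0, and t* is the unique nonnegative real number t satisfying t = ‖φ(t) − v‖. -/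
/-!
Writing `a = q - x`, `w = v - x` and `D = r² - ‖a‖² > 0`, one has `φ(t) - v = (t/r)•a - w`, so
squaring `t = ‖φ(t) - v‖` and multiplying by `r²/D` turns it into the quadratic
`t² + 2⟪u, a⟫ t = r⟪u, w⟫`, whose constant term `r²‖w‖²/D` is positive. Such a quadratic has
exactly one nonnegative root, namely `√(⟪u, a⟫² + r⟪u, w⟫) - ⟪u, a⟫`, and it is positive.
-/

open scoped RealInnerProductSpace

namespace Real

theorem sqrt_sq_add_sub_pos {b c : ℝ} (hc : 0 < c) : 0 < √(b ^ 2 + c) - b :=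
  sub_pos.2 (lt_sqrt_of_sq_lt (by linarith))

theorem sq_add_two_mul_eq_iff_eq_sqrt_sub {b c t : ℝ} (hc : 0 < c) (ht : 0 ≤ t) :
    t ^ 2 + 2 * b * t = c ↔ t = √(b ^ 2 + c) - b := by
  constructor
  · intro h
    have hroot : 0 < t + b := by nlinarith
    rw [eq_sub_iff_add_eq, eq_comm, sqrt_eq_iff_eq_sq (by positivity) hroot.le]
    linear_combination -h
  · rintro rfl
    linear_combination sq_sqrt (by positivity : 0 ≤ b ^ 2 + c)

end Real

section InnerProductSpace

variable {H : Type*} [NormedAddCommGroup H] [InnerProductSpace ℝ H]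

theorem eq_norm_smul_sub_iff {a w u : H} {r t : ℝ} (hr : r ≠ 0) (hD : r ^ 2 - ‖a‖ ^ 2 ≠ 0)
    (hu : u = (r / (r ^ 2 - ‖a‖ ^ 2)) • w) (ht : 0 ≤ t) :
    t = ‖(t / r) • a - w‖ ↔ t ^ 2 + 2 * ⟪u, a⟫ * t = r * ⟪u, w⟫ := by
  have hscale : (t ^ 2 + 2 * ⟪u, a⟫ * t - r * ⟪u, w⟫) * (r ^ 2 - ‖a‖ ^ 2)
      = (t ^ 2 - ‖(t / r) • a - w‖ ^ 2) * r ^ 2 := by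
    rw [hu, real_inner_smul_left, real_inner_smul_left, real_inner_self_eq_norm_sq,
      norm_sub_sq_real, real_inner_smul_left, norm_smul, Real.norm_eq_abs, mul_pow, sq_abs,
      real_inner_comm]
    field_simp
    ring
  rw [← sq_eq_sq₀ ht (norm_nonneg _), ← sub_eq_zero, ← sub_eq_zero (a := t ^ 2 + _),
    ← mul_eq_zero_iff_right (pow_ne_zero 2 hr), ← hscale, mul_eq_zero_iff_right hD]

end InnerProductSpace

/-- interior case of the adjusted-distance theorem:
If `‖q − x‖ < r` and `x ≠ v`, with `u = r·(v − x)/(r² − ‖q − x‖²)` and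
`t* = √(⟨u, q − x⟩² + r·⟨u, v − x⟩) − ⟨u, q − x⟩`, then `t* > 0` and `t*` is the
unique nonnegative real `t` with `t = ‖φ(t) − v‖`, where
`φ(t) = (t/r)·q + (1 − t/r)·x`. -/
theorem adjusted_distance_interior_case
    {H : Type*} [NormedAddCommGroup H] [InnerProductSpace ℝ H]
    (q x v : H) (hxv : x ≠ v) (r : ℝ) (hr : 0 < r) (hqx : ‖q - x‖ < r)
    (u : H) (hu : u = (r / (r ^ 2 - ‖q - x‖ ^ 2)) • (v - x))
    (tstar : ℝ)
    (htstar : tstar = Real.sqrt (⟪u, q - x⟫ ^ 2 + r * ⟪u, v - x⟫)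
        - ⟪u, q - x⟫) :
    0 < tstar
      ∧ tstar = ‖(tstar / r) • q + (1 - tstar / r) • x - v‖
      ∧ ∀ t : ℝ, 0 ≤ t → t = ‖(t / r) • q + (1 - t / r) • x - v‖ → t = tstar := by
  have hD : 0 < r ^ 2 - ‖q - x‖ ^ 2 := by nlinarith [norm_nonneg (q - x)]
  have hconst : 0 < r * ⟪u, v - x⟫ := by
    rw [hu, real_inner_smul_left, real_inner_self_eq_norm_sq]
    have : 0 < ‖v - x‖ := norm_pos_iff.2 (sub_ne_zero.2 hxv.symm)
    positivity
  have hphi (t : ℝ) : (t / r) • q + (1 - t / r) • x - v = (t / r) • (q - x) - (v - x) := by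
    module
  have hroot (t : ℝ) (ht : 0 ≤ t) : t = ‖(t / r) • q + (1 - t / r) • x - v‖ ↔ t = tstar := by
    rw [hphi, eq_norm_smul_sub_iff hr.ne' hD.ne' hu ht,
      Real.sq_add_two_mul_eq_iff_eq_sqrt_sub hconst ht, htstar]
  have hpos : 0 < tstar := htstar ▸ Real.sqrt_sq_add_sub_pos hconst
  exact ⟨hpos, (hroot tstar hpos.le).2 rfl, fun t ht => (hroot t ht).1⟩
end

section
/- Let H be a real inner product space, let q, x, v ∈ H with x ≠ v, let r > 0, and define φ(t) = (t/r)·q + (1 − t/r)·x. If ‖q − x‖ ≤ r and ‖q − v‖ ≤ r, then there exists t with 0 < t ≤ r such that t = ‖φ(t) − v‖. -/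
/-!
The continuous function `t ↦ ‖φ(t) − v‖ − t` is positive at `0` (as `x ≠ v`) and
nonpositive at `r` (as `φ(r) = q` and `‖q − v‖ ≤ r`), so by the intermediate value theorem it
vanishes somewhere in `(0, r]`.
-/

open Set

theorem exists_mem_Ioc_eq_self_of_continuousOn {g : ℝ → ℝ} {r : ℝ} (hr : 0 ≤ r)
    (hg : ContinuousOn g (Icc 0 r)) (hg0 : 0 < g 0) (hgr : g r ≤ r) :
    ∃ t ∈ Ioc 0 r, g t = t := by
  have hcont : ContinuousOn (fun t => g t - t) (Icc 0 r) := hg.sub continuousOn_id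
  have hzero : (0 : ℝ) ∈ Icc (g r - r) (g 0 - 0) := ⟨by linarith, by linarith⟩
  obtain ⟨t, ⟨ht0, htr⟩, hgt⟩ := intermediate_value_Icc' hr hcont hzero
  have ht : g t = t := by linarith
  refine ⟨t, ⟨lt_of_le_of_ne ht0 ?_, htr⟩, ht⟩
  rintro rfl
  linarith

theorem adjusted_distance_exists_general
    {H : Type*} [NormedAddCommGroup H] [InnerProductSpace ℝ H]
    (q x v : H) (hxv : x ≠ v) (r : ℝ) (hr : 0 < r)
    (hqv : ‖q - v‖ ≤ r) :
    ∃ t : ℝ, 0 < t ∧ t ≤ r ∧ t = ‖(t / r) • q + (1 - t / r) • x - v‖ := by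
  have hcont : Continuous fun t : ℝ => ‖(t / r) • q + (1 - t / r) • x - v‖ := by fun_prop
  have hpos : 0 < ‖((0 : ℝ) / r) • q + (1 - 0 / r) • x - v‖ := by
    simpa [sub_eq_zero] using hxv
  have hend : ‖(r / r) • q + (1 - r / r) • x - v‖ ≤ r := by
    simpa [div_self hr.ne'] using hqv
  obtain ⟨t, ⟨ht0, htr⟩, ht⟩ :=
    exists_mem_Ioc_eq_self_of_continuousOn hr.le hcont.continuousOn hpos hend
  exact ⟨t, ht0, htr, ht.symm⟩

/-- If `x ≠ v`, `‖q − x‖ ≤ r` and `‖q − v‖ ≤ r` for `r > 0`, then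
there exists `t` with `0 < t ≤ r` such that `t = ‖φ(t) − v‖`, where
`φ(t) = (t/r)·q + (1 − t/r)·x`. -/
theorem adjusted_distance_exists
    {H : Type*} [NormedAddCommGroup H] [InnerProductSpace ℝ H]
    (q x v : H) (hxv : x ≠ v) (r : ℝ) (hr : 0 < r)
    (hqx : ‖q - x‖ ≤ r) (hqv : ‖q - v‖ ≤ r) :
    ∃ t : ℝ, 0 < t ∧ t ≤ r ∧ t = ‖(t / r) • q + (1 - t / r) • x - v‖ :=
  adjusted_distance_exists_general q x v hxv r hr hqv
end

section
/- Let H be a real inner product space, let q, x, v ∈ H with x ≠ v, let r > 0, and define φ(t) = (t/r)·q + (1 − t/r)·x. If ‖q − x‖ < r and ‖q − v‖ ≤ r, then the unique nonnegative real number t satisfying t = ‖φ(t) − v‖ satisfies t ≤ r. -/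
/-! Writing `φ(t) - v = (q - v) + (t/r - 1) • (q - x)`, the triangle inequality gives
`‖φ(t) - v‖ < r + (t/r - 1) * r = t` as soon as `t > r`, so no fixed point of
`t ↦ ‖φ(t) - v‖` lies beyond `r`. -/

theorem norm_smul_add_one_sub_smul_sub_le {E : Type*} [SeminormedAddCommGroup E]
    [NormedSpace ℝ E] (q x v : E) {s : ℝ} (hs : 1 ≤ s) :
    ‖s • q + (1 - s) • x - v‖ ≤ ‖q - v‖ + (s - 1) * ‖q - x‖ := by
  have hsplit : s • q + (1 - s) • x - v = (q - v) + (s - 1) • (q - x) := by module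
  calc ‖s • q + (1 - s) • x - v‖ = ‖(q - v) + (s - 1) • (q - x)‖ := by rw [hsplit]
    _ ≤ ‖q - v‖ + ‖(s - 1) • (q - x)‖ := norm_add_le _ _
    _ = ‖q - v‖ + (s - 1) * ‖q - x‖ := by
      rw [norm_smul, Real.norm_of_nonneg (sub_nonneg.2 hs)]

theorem norm_div_smul_add_one_sub_div_smul_sub_lt {E : Type*} [SeminormedAddCommGroup E]
    [NormedSpace ℝ E] {q x v : E} {r t : ℝ} (hqx : ‖q - x‖ < r) (hqv : ‖q - v‖ ≤ r)
    (hrt : r < t) : ‖(t / r) • q + (1 - t / r) • x - v‖ < t := by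
  have hr : 0 < r := (norm_nonneg _).trans_lt hqx
  have hs : 1 < t / r := (one_lt_div hr).2 hrt
  calc ‖(t / r) • q + (1 - t / r) • x - v‖ ≤ ‖q - v‖ + (t / r - 1) * ‖q - x‖ :=
        norm_smul_add_one_sub_smul_sub_le q x v hs.le
    _ < r + (t / r - 1) * r :=
        add_lt_add_of_le_of_lt hqv (mul_lt_mul_of_pos_left hqx (sub_pos.2 hs))
    _ = t := by field_simp; ring

theorem adjusted_distance_le_radius_general
    {H : Type*} [NormedAddCommGroup H] [InnerProductSpace ℝ H]
    (q x v : H) (r : ℝ)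
    (hqx : ‖q - x‖ < r) (hqv : ‖q - v‖ ≤ r) :
    ∀ t : ℝ, 0 ≤ t → t = ‖(t / r) • q + (1 - t / r) • x - v‖ → t ≤ r := by
  intro t _ hfix
  by_contra! hrt
  exact (norm_div_smul_add_one_sub_div_smul_sub_lt hqx hqv hrt).ne hfix.symm

/-- If `x ≠ v`, `‖q − x‖ < r` and `‖q − v‖ ≤ r`, then the (unique)
nonnegative real `t` with `t = ‖φ(t) − v‖` satisfies `t ≤ r`, where
`φ(t) = (t/r)·q + (1 − t/r)·x`. -/
theorem adjusted_distance_le_radius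
    {H : Type*} [NormedAddCommGroup H] [InnerProductSpace ℝ H]
    (q x v : H) (hxv : x ≠ v) (r : ℝ) (hr : 0 < r)
    (hqx : ‖q - x‖ < r) (hqv : ‖q - v‖ ≤ r) :
    ∀ t : ℝ, 0 ≤ t → t = ‖(t / r) • q + (1 - t / r) • x - v‖ → t ≤ r :=
  adjusted_distance_le_radius_general q x v r hqx hqv
end

section
/- Let H be a real Hilbert space, μ a probability measure on H, and for p ∈ H define F_p : ℝ → ℝ by F_p(s) = μ(closed ball of center p and radius s). Let q, x ∈ H, r > 0, and φ(t) = (t/r)·q + (1 − t/r)·x (so φ(r) = q). Suppose there exist δ > 0 and g : [0, r] → ℝ such that: (i) for every t ∈ [0, r] and every s ∈ (0, δ), F_{φ(t)} is differentiable at s and F_{φ(t)}(s) > 0; (ii) as s → 0⁺, the quantities ID_{F_{φ(t)}}(s) := s·F_{φ(t)}′(s)/F_{φ(t)}(s) converge to g(t) uniformly in t ∈ [0, r]; and (iii) g is continuous at t = r. Then lim_{s→0⁺} ID_{F_{φ(r−s)}}(s) = g(r); that is, the local intrinsic dimensionality of the moving-center (interpolated) distance distribution F_{q,x,r} equals the local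 intrinsic dimensionality ID*_{F_q} = g(r) of the distance distribution centered at q. -/
open Filter Topology MeasureTheory

/-- The c.d.f. of the distance distribution induced by the probability measure
`μ` relative to the point `p`: `F_p(s) = μ(closedBall p s)`. -/
noncomputable def distCDF {H : Type*} [NormedAddCommGroup H]
    [InnerProductSpace ℝ H] [MeasurableSpace H] (μ : Measure H) (p : H) (s : ℝ) : ℝ :=
  (μ (Metric.closedBall p s)).toReal

/-! The ID of the moving-center distribution at scale `s` is the ID of `F_{φ t}` at scale `s`
evaluated along the diagonal `t = r - s`; as `s → 0⁺` the diagonal approaches `r` from inside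
`[0, r]`, so uniform convergence to `g` together with continuity of `g` at `r` gives the limit. -/

theorem tendsto_const_sub_nhdsGT_zero_nhdsWithin_Icc {α : Type*} [AddCommGroup α] [LinearOrder α]
    [IsOrderedAddMonoid α] [TopologicalSpace α] [OrderTopology α] {a b : α} (hab : a < b) :
    Tendsto (fun s => b - s) (𝓝[>] 0) (𝓝[Set.Icc a b] b) := by
  refine tendsto_nhdsWithin_iff.2 ⟨?_, ?_⟩
  · simpa using ((continuous_sub_left b).tendsto 0).mono_left nhdsWithin_le_nhds
  · filter_upwards [Ioo_mem_nhdsGT (sub_pos.2 hab)] with s hs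
    exact ⟨le_sub_comm.1 hs.2.le, sub_le_self b hs.1.le⟩

theorem lid_moving_center_interpolation_general
    {H : Type*} [NormedAddCommGroup H] [InnerProductSpace ℝ H]
    [MeasurableSpace H]
    (μ : Measure H)
    (r : ℝ) (hr : 0 < r)
    (φ : ℝ → H)
    (g : ℝ → ℝ)
    (hunif : TendstoUniformlyOn
      (fun s t => s * deriv (distCDF μ (φ t)) s / distCDF μ (φ t) s)
      g (𝓝[>] (0 : ℝ)) (Set.Icc 0 r))
    (hgcont : ContinuousWithinAt g (Set.Icc 0 r) r) :
    Tendsto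
      (fun s => s * deriv (distCDF μ (φ (r - s))) s / distCDF μ (φ (r - s)) s)
      (𝓝[>] (0 : ℝ)) (𝓝 (g r)) :=
  hunif.tendsto_comp hgcont (tendsto_const_sub_nhdsGT_zero_nhdsWithin_Icc hr)

/-- interpolation theorem for local intrinsic dimensionality:
under uniform convergence of `ID_{F_{φ(t)}}(s) = s·F_{φ(t)}′(s)/F_{φ(t)}(s)` to
`g(t)` as `s → 0⁺`, uniformly in `t ∈ [0, r]`, and continuity of `g` at `r`,
the local ID of the moving-center distance distribution equals
`ID*_{F_q} = g(r)`: `lim_{s→0⁺} ID_{F_{φ(r−s)}}(s) = g(r)`. -/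
theorem lid_moving_center_interpolation
    {H : Type*} [NormedAddCommGroup H] [InnerProductSpace ℝ H] [CompleteSpace H]
    [MeasurableSpace H] [BorelSpace H]
    (μ : Measure H) [IsProbabilityMeasure μ]
    (q x : H) (r : ℝ) (hr : 0 < r)
    (φ : ℝ → H) (hφ : ∀ t, φ t = (t / r) • q + (1 - t / r) • x)
    (δ : ℝ) (hδ : 0 < δ) (g : ℝ → ℝ)
    (hdiff : ∀ t ∈ Set.Icc (0 : ℝ) r, ∀ s ∈ Set.Ioo (0 : ℝ) δ,
      DifferentiableAt ℝ (distCDF μ (φ t)) s ∧ 0 < distCDF μ (φ t) s)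
    (hunif : TendstoUniformlyOn
      (fun s t => s * deriv (distCDF μ (φ t)) s / distCDF μ (φ t) s)
      g (𝓝[>] (0 : ℝ)) (Set.Icc 0 r))
    (hgcont : ContinuousWithinAt g (Set.Icc 0 r) r) :
    Tendsto
      (fun s => s * deriv (distCDF μ (φ (r - s))) s / distCDF μ (φ (r - s)) s)
      (𝓝[>] (0 : ℝ)) (𝓝 (g r)) :=
  lid_moving_center_interpolation_general μ r hr φ g hunif hgcont
end
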